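/- arXiv:1108.1279 — 6 statements merged into one kernel-verified Lean document; each statement's English description precedes it below -/
import Mathlib

section
/- Hildebrandt's theorem for bounded operators: let Z be a bounded operator on a complex Hilbert space and let λ be an eigenvalue of Z lying on the topological boundary of the numerical range Num(Z). Then ker(λ − Z) = ker(conj(λ) − Z*), i.e. λ is a normal eigenvalue. -/
open scoped InnerProductSpace

/-- The numerical range of a bounded operator `Z`:
`{⟨Z f, f⟩ : ‖f‖ = 1}` (inner product linear in `Z f`). -/
def numRange {H : Type*} [NormedAddCommGroup H] [InnerProductSpace ℂ H]
    (Z : H →L[ℂ] H) : Set ℂ :=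
  {z | ∃ f : H, ‖f‖ = 1 ∧ ⟪f, Z f⟫_ℂ = z}

/-!
Let `Z f = λ f` with `‖f‖ = 1` and suppose `g := Z† f - conj λ • f ≠ 0`. Then `g ⊥ f`, and with
`e := g / ‖g‖` the compression of `Z` to `span {f, e}` is `!![λ, ‖g‖; 0, μ]`, `μ = ⟪e, Z e⟫`.
For `v = a f + b e` with `a` real and `a² + ‖b‖² = 1` this gives
`⟪v, Z v⟫ = λ + a ‖g‖ b + ‖b‖² (μ - λ)`, and an intermediate-value argument in `‖b‖` shows that
these values fill a disc around `λ`, so `λ` is an interior point of `Num(Z)`. The reverse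
inclusion follows by applying this to `Z†`, whose numerical range is the conjugate of `Num(Z)`.
-/

open Filter Topology ComplexConjugate

lemma exists_norm_sub_sq_mul_eq_mul_sqrt {c : ℝ} (hc : 0 < c) (d : ℂ) :
    ∃ ε > 0, ∀ z : ℂ, ‖z‖ < ε →
      ∃ s ∈ Set.Icc (0 : ℝ) (1 / 2), ‖z - (s : ℂ) ^ 2 * d‖ = c * s * √(1 - s ^ 2) := by
  -- `t ≤ 1/2` and `t ‖d‖ ≤ c/4` make `h t ≤ ‖z‖ - c t / 4` below.
  set t := min (1 / 2) (c / (4 * (‖d‖ + 1)))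
  have ht_pos : 0 < t := lt_min (by norm_num) (by positivity)
  have ht_half : t ≤ 1 / 2 := min_le_left _ _
  have ht_d : t * ‖d‖ ≤ c / 4 := by
    have : t * (4 * (‖d‖ + 1)) ≤ c := (le_div_iff₀ (by positivity)).mp (min_le_right _ _)
    nlinarith [norm_nonneg d]
  refine ⟨c * t / 4, by positivity, fun z hz => ?_⟩
  set h : ℝ → ℝ := fun s => ‖z - (s : ℂ) ^ 2 * d‖ - c * s * √(1 - s ^ 2)
  have h_cont : ContinuousOn h (Set.Icc 0 t) := by unfold h; fun_prop
  have h_zero : 0 ≤ h 0 := by simp [h]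
  have h_t : h t ≤ 0 := by
    have h_sqrt : 1 / 2 ≤ √(1 - t ^ 2) :=
      Real.le_sqrt_of_sq_le (by nlinarith)
    have h_tri : ‖z - (t : ℂ) ^ 2 * d‖ ≤ ‖z‖ + t ^ 2 * ‖d‖ :=
      (norm_sub_le _ _).trans_eq <| by
        rw [norm_mul, norm_pow, Complex.norm_real, Real.norm_of_nonneg ht_pos.le]
    simp only [h]
    nlinarith [mul_le_mul_of_nonneg_left h_sqrt (by positivity : 0 ≤ c * t)]
  obtain ⟨s, hs, hs_root⟩ := intermediate_value_Icc' ht_pos.le h_cont ⟨h_t, h_zero⟩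
  exact ⟨s, ⟨hs.1, hs.2.trans ht_half⟩, sub_eq_zero.mp hs_root⟩

lemma eventually_exists_mul_add_norm_sq_mul_eq {c : ℝ} (hc : 0 < c) (d : ℂ) :
    ∀ᶠ z in 𝓝 (0 : ℂ), ∃ (a : ℝ) (b : ℂ), a ^ 2 + ‖b‖ ^ 2 = 1 ∧ a * c * b + ‖b‖ ^ 2 * d = z := by
  obtain ⟨ε, hε, hsolve⟩ := exists_norm_sub_sq_mul_eq_mul_sqrt hc d
  filter_upwards [Metric.ball_mem_nhds 0 hε] with z hz
  obtain ⟨s, hs, hs_eq⟩ := hsolve z (mem_ball_zero_iff.mp hz)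
  have hs_sq : 0 < 1 - s ^ 2 := by nlinarith [hs.1, hs.2]
  set a := √(1 - s ^ 2)
  have ha : 0 < a := Real.sqrt_pos.mpr hs_sq
  have ha_sq : a ^ 2 = 1 - s ^ 2 := Real.sq_sqrt hs_sq.le
  have hac : (a * c : ℂ) ≠ 0 := by exact_mod_cast (mul_pos ha hc).ne'
  set b := (z - (s : ℂ) ^ 2 * d) / (a * c)
  have hb : ‖b‖ = s := by
    rw [norm_div, hs_eq, norm_mul, Complex.norm_real, Complex.norm_real, Real.norm_of_nonneg ha.le,
      Real.norm_of_nonneg hc.le]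
    field_simp
  refine ⟨a, b, by rw [hb, ha_sq]; ring, ?_⟩
  rw [hb, mul_div_cancel₀ _ hac]
  ring

lemma norm_ofReal_smul_add_smul_eq_one {H : Type*} [NormedAddCommGroup H]
    [InnerProductSpace ℂ H] {f e : H} (hf : ‖f‖ = 1) (he : ‖e‖ = 1) (hfe : ⟪f, e⟫_ℂ = 0)
    {a : ℝ} {b : ℂ} (hab : a ^ 2 + ‖b‖ ^ 2 = 1) : ‖(a : ℂ) • f + b • e‖ = 1 := by
  have h_orth : ⟪(a : ℂ) • f, b • e⟫_ℂ = 0 := by simp [hfe]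
  have h_sq := norm_add_sq_eq_norm_sq_add_norm_sq_of_inner_eq_zero _ _ h_orth
  rw [norm_smul, norm_smul, hf, he, Complex.norm_real, Real.norm_eq_abs] at h_sq
  nlinarith [norm_nonneg ((a : ℂ) • f + b • e), sq_abs a]

section Adjoint

variable {H : Type*} [NormedAddCommGroup H] [InnerProductSpace ℂ H] [CompleteSpace H]

open ContinuousLinearMap

lemma numRange_mem_nhds_of_adjoint_apply_ne (Z : H →L[ℂ] H) {lam : ℂ} {f : H} (hf : ‖f‖ = 1)
    (hZf : Z f = lam • f) (hne : adjoint Z f ≠ conj lam • f) : numRange Z ∈ 𝓝 lam := by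
  set g := adjoint Z f - conj lam • f
  have hg : 0 < ‖g‖ := norm_pos_iff.mpr (sub_ne_zero.mpr hne)
  set e := (‖g‖ : ℂ)⁻¹ • g
  have hff : ⟪f, f⟫_ℂ = 1 := by simp [hf]
  have hfg : ⟪f, g⟫_ℂ = 0 := by simp [g, adjoint_inner_right, hZf, inner_smul_left]
  have hfe : ⟪f, e⟫_ℂ = 0 := by simp [e, hfg]
  have he : ‖e‖ = 1 := by simp [e, norm_smul, hg.ne']
  have hfZe : ⟪f, Z e⟫_ℂ = ‖g‖ := by
    have hge : ⟪g, e⟫_ℂ = ‖g‖ := by simp [e, inner_self_eq_norm_sq_to_K, pow_two, hg.ne']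
    rw [← adjoint_inner_left, show adjoint Z f = g + conj lam • f by simp [g],
      inner_add_left, inner_smul_left, hge, hfe, mul_zero, add_zero]
  have hef : ⟪e, f⟫_ℂ = 0 := by rw [← inner_conj_symm, hfe, map_zero]
  have hshift : Tendsto (fun w => w - lam) (𝓝 lam) (𝓝 0) := by
    simpa using (continuous_sub_right lam).tendsto lam
  filter_upwards [hshift.eventually
    (eventually_exists_mul_add_norm_sq_mul_eq hg (⟪e, Z e⟫_ℂ - lam))] with w ⟨a, b, hab, hw⟩
  refine ⟨(a : ℂ) • f + b • e, norm_ofReal_smul_add_smul_eq_one hf he hfe hab, ?_⟩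
  have hb : conj b * b = (‖b‖ ^ 2 : ℝ) := by
    rw [mul_comm, Complex.mul_conj, Complex.normSq_eq_norm_sq]
  have hab' : (a : ℂ) ^ 2 + (‖b‖ ^ 2 : ℝ) = 1 := by exact_mod_cast hab
  simp only [map_add, map_smul, inner_add_left, inner_add_right, inner_smul_left,
    inner_smul_right, Complex.conj_ofReal, hZf, hff, hfZe, hef]
  push_cast at hb hab' hw ⊢
  linear_combination ⟪e, Z e⟫_ℂ * hb + hw + lam * hab'

lemma adjoint_apply_eq_conj_smul_of_notMem_interior_numRange (Z : H →L[ℂ] H) {lam : ℂ}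
    (hlam : lam ∉ interior (numRange Z)) {f : H} (hZf : Z f = lam • f) :
    adjoint Z f = conj lam • f := by
  by_contra hne
  have hf0 : f ≠ 0 := by rintro rfl; simp at hne
  have hZu : Z (NormedSpace.normalize f) = lam • NormedSpace.normalize f := by
    rw [NormedSpace.normalize, map_smul_of_tower, hZf, smul_comm]
  refine hlam (mem_interior_iff_mem_nhds.mpr
    (numRange_mem_nhds_of_adjoint_apply_ne Z (NormedSpace.norm_normalize hf0) hZu fun hu => hne ?_))
  rw [← NormedSpace.norm_smul_normalize f, map_smul_of_tower, hu, smul_comm]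

lemma numRange_adjoint (Z : H →L[ℂ] H) : numRange (adjoint Z) = conj ⁻¹' numRange Z := by
  ext z
  refine exists_congr fun f => and_congr_right fun _ => ?_
  rw [← inner_conj_symm, adjoint_inner_left]
  exact star_eq_iff_star_eq.trans eq_comm

lemma conj_mem_interior_numRange_adjoint_iff (Z : H →L[ℂ] H) {lam : ℂ} :
    conj lam ∈ interior (numRange (adjoint Z)) ↔ lam ∈ interior (numRange Z) := by
  rw [numRange_adjoint]
  exact (Set.ext_iff.mp (Complex.conjCLE.toHomeomorph.preimage_interior _) (conj lam)).symm.trans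
    (by simp)

end Adjoint

theorem stmt4_general {H : Type*} [NormedAddCommGroup H] [InnerProductSpace ℂ H]
    [CompleteSpace H] (Z : H →L[ℂ] H) (lam : ℂ)
    (hbd : lam ∈ frontier (numRange Z)) :
    {f : H | Z f = lam • f}
      = {f : H | ContinuousLinearMap.adjoint Z f = (starRingEnd ℂ) lam • f} := by
  ext f
  refine ⟨adjoint_apply_eq_conj_smul_of_notMem_interior_numRange Z hbd.2, fun hf => ?_⟩
  have hbd_adj : conj lam ∉ interior (numRange (ContinuousLinearMap.adjoint Z)) :=
    (conj_mem_interior_numRange_adjoint_iff Z).not.mpr hbd.2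
  simpa using adjoint_apply_eq_conj_smul_of_notMem_interior_numRange _ hbd_adj hf

/-- Hildebrandt's theorem: if `λ` is an eigenvalue of a bounded operator `Z`
lying on the topological boundary of the numerical range of `Z`, then
`ker(λ − Z) = ker(conj λ − Z*)`, i.e. `λ` is a normal eigenvalue. -/
theorem stmt4 {H : Type*} [NormedAddCommGroup H] [InnerProductSpace ℂ H]
    [CompleteSpace H] (Z : H →L[ℂ] H) (lam : ℂ)
    (heig : ∃ f : H, f ≠ 0 ∧ Z f = lam • f)
    (hbd : lam ∈ frontier (numRange Z)) :
    {f : H | Z f = lam • f}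
      = {f : H | ContinuousLinearMap.adjoint Z f = (starRingEnd ℂ) lam • f} :=
  stmt4_general Z lam hbd
end

section
/- Let Z be a densely defined closed operator with Dom(Z) ⊂ Dom(Z*), and let λ be an eigenvalue of Z lying on the boundary of Num(Z). Then ker(λ − Z) ⊂ ker(conj(λ) − Z*). -/
open scoped InnerProductSpace ComplexConjugate Topology
open Filter

/-!
If `Z f = λ f` with `f ≠ 0` and `a := ⟨f, Z g⟩ - λ ⟨f, g⟩ ≠ 0` for some `g` in the domain, then the
Rayleigh quotient of `f + t g` equals `λ + (t a + c |t|²) / ‖f + t g‖²`. Its real derivative at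
`t = 0` is multiplication by `a / ‖f‖² ≠ 0`, so by the inverse function theorem it covers a
neighbourhood of `λ`, and `λ` is interior to `Num(Z)`. At a boundary point therefore
`⟨f, Z g⟩ = λ ⟨f, g⟩` for all `g`, which says `Z* f = conj λ • f`.
-/

/-- The numerical range `{⟨T f, f⟩ : f ∈ p, ‖f‖ = 1}`. -/
def numRangeFun {H : Type*} [NormedAddCommGroup H] [InnerProductSpace ℂ H]
    (p : Submodule ℂ H) (T : p → H) : Set ℂ :=
  {z | ∃ f : p, ‖(f : H)‖ = 1 ∧ ⟪(f : H), T f⟫_ℂ = z}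

theorem Complex.map_nhds_eq_of_hasStrictFDerivAt_smulRight {F : ℂ → ℂ} {a z : ℂ}
    (hF : HasStrictFDerivAt F ((ContinuousLinearMap.id ℝ ℂ).smulRight a) z) (ha : a ≠ 0) :
    map F (𝓝 z) = 𝓝 (F z) :=
  hF.map_nhds_eq_of_surj <| LinearMap.range_eq_top.2 fun y =>
    ⟨y / a, by simp [div_mul_cancel₀ _ ha]⟩

theorem hasStrictFDerivAt_perturbation_div (a d : ℂ) {D : ℂ → ℂ} {D' : ℂ →L[ℝ] ℂ}
    (hD : HasStrictFDerivAt D D' 0) (hD0 : D 0 ≠ 0) :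
    HasStrictFDerivAt (fun t : ℂ => (t * a + conj t * t * d) / D t)
      ((ContinuousLinearMap.id ℝ ℂ).smulRight (a / D 0)) 0 := by
  have hid : HasStrictFDerivAt (fun t : ℂ => t) (ContinuousLinearMap.id ℝ ℂ) 0 :=
    hasStrictFDerivAt_id 0
  have hconj : HasStrictFDerivAt (fun t : ℂ => conj t) Complex.conjCLE.toContinuousLinearMap 0 :=
    Complex.conjCLE.toContinuousLinearMap.hasStrictFDerivAt
  have hN := (hid.mul_const a).add ((hconj.mul hid).mul_const d)
  have hinv := ((hasStrictDerivAt_inv hD0).hasStrictFDerivAt.restrictScalars ℝ).comp 0 hD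
  simp only [div_eq_mul_inv]
  refine (hN.mul hinv).congr_fderiv ?_
  ext
  simp
  ring

section NumericalRange

variable {H : Type*} [NormedAddCommGroup H] [InnerProductSpace ℂ H] {p : Submodule ℂ H}

theorem inner_div_inner_self_mem_numRangeFun (T : p →ₗ[ℂ] H) {w : p} (hw : (w : H) ≠ 0) :
    ⟪(w : H), T w⟫_ℂ / ⟪(w : H), (w : H)⟫_ℂ ∈ numRangeFun p T := by
  have hn : (‖(w : H)‖ : ℂ) ≠ 0 := by simpa using hw
  refine ⟨(‖(w : H)‖⁻¹ : ℂ) • w, ?_, ?_⟩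
  · simp [norm_smul, hw]
  · simp only [map_smul, Submodule.coe_smul, inner_smul_left, inner_smul_right,
      inner_self_eq_norm_sq_to_K, map_inv₀, Complex.conj_ofReal]
    field_simp
    exact (mul_div_cancel_left₀ _ (pow_ne_zero 2 hn)).symm

theorem inner_add_smul_map_sub_mul_inner (T : p →ₗ[ℂ] H) {lam : ℂ} {f : p} (hf : T f = lam • (f : H))
    (g : p) (t : ℂ) :
    ⟪((f + t • g : p) : H), T (f + t • g)⟫_ℂ - lam * ⟪((f + t • g : p) : H), (f + t • g : p)⟫_ℂ
      = t * (⟪(f : H), T g⟫_ℂ - lam * ⟪(f : H), (g : H)⟫_ℂ)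
        + conj t * t * (⟪(g : H), T g⟫_ℂ - lam * ⟪(g : H), (g : H)⟫_ℂ) := by
  simp only [map_add, map_smul, hf, Submodule.coe_add, Submodule.coe_smul, inner_add_left,
    inner_add_right, inner_smul_left, inner_smul_right]
  ring

theorem inner_map_eq_of_not_mem_interior_numRangeFun (T : p →ₗ[ℂ] H) {lam : ℂ}
    (hlam : lam ∉ interior (numRangeFun p T)) {f : p} (hf : T f = lam • (f : H)) (g : p) :
    ⟪(f : H), T g⟫_ℂ = lam * ⟪(f : H), (g : H)⟫_ℂ := by
  rcases eq_or_ne (f : H) 0 with hf0 | hf0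
  · simp [hf0]
  by_contra hne
  apply hlam
  set a := ⟪(f : H), T g⟫_ℂ - lam * ⟪(f : H), (g : H)⟫_ℂ
  set d := ⟪(g : H), T g⟫_ℂ - lam * ⟪(g : H), (g : H)⟫_ℂ
  have hw : ContDiff ℝ 1 fun t : ℂ => ((f + t • g : p) : H) := by
    simp only [Submodule.coe_add, Submodule.coe_smul]; fun_prop
  have hD := (hw.inner ℂ hw).contDiffAt.hasStrictFDerivAt (x := 0) one_ne_zero
  have hD0 : ⟪((f + (0 : ℂ) • g : p) : H), (f + (0 : ℂ) • g : p)⟫_ℂ ≠ 0 := by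
    simpa using hf0
  have hmap := Complex.map_nhds_eq_of_hasStrictFDerivAt_smulRight
    ((hasStrictFDerivAt_perturbation_div a d hD hD0).const_add lam)
    (div_ne_zero (sub_ne_zero.2 hne) hD0)
  simp only [zero_mul, map_zero, mul_zero, add_zero, zero_div] at hmap
  rw [mem_interior_iff_mem_nhds, ← hmap, mem_map]
  have hw_ne : ∀ᶠ t in 𝓝 (0 : ℂ), ((f + t • g : p) : H) ≠ 0 :=
    hw.continuous.continuousAt.eventually_ne (by simpa using hf0)
  filter_upwards [hw_ne] with t ht
  rw [Set.mem_preimage]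
  convert inner_div_inner_self_mem_numRangeFun T ht using 1
  rw [← inner_add_smul_map_sub_mul_inner T hf g t, sub_div,
    mul_div_cancel_right₀ _ (inner_self_ne_zero.2 ht), add_sub_cancel]

end NumericalRange

theorem stmt5_general {H : Type*} [NormedAddCommGroup H] [InnerProductSpace ℂ H]
    [CompleteSpace H] (Z : H →ₗ.[ℂ] H)
    (hdense : Dense (Z.domain : Set H))
    (hdom : Z.domain ≤ Z.adjoint.domain) (lam : ℂ)
    (hbd : lam ∈ frontier (numRangeFun Z.domain (fun f => Z f))) :
    ∀ f : Z.domain, Z f = lam • (f : H) →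
      ∃ hf : (f : H) ∈ Z.adjoint.domain,
        Z.adjoint ⟨(f : H), hf⟩ = (starRingEnd ℂ) lam • (f : H) := by
  intro f hf
  refine ⟨hdom f.2, Z.adjoint_apply_eq hdense _ fun g => ?_⟩
  rw [inner_smul_left, Complex.conj_conj]
  exact (inner_map_eq_of_not_mem_interior_numRangeFun Z.toFun hbd.2 hf g).symm

/-- Let `Z` be densely defined and closed with `Dom(Z) ⊆ Dom(Z*)`, and let `λ`
be an eigenvalue of `Z` lying on the boundary of `Num(Z)`.  Then
`ker(λ − Z) ⊆ ker(conj λ − Z*)`. -/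
theorem stmt5 {H : Type*} [NormedAddCommGroup H] [InnerProductSpace ℂ H]
    [CompleteSpace H] (Z : H →ₗ.[ℂ] H)
    (hdense : Dense (Z.domain : Set H)) (hclosed : Z.IsClosed)
    (hdom : Z.domain ≤ Z.adjoint.domain) (lam : ℂ)
    (heig : ∃ f : Z.domain, (f : H) ≠ 0 ∧ Z f = lam • (f : H))
    (hbd : lam ∈ frontier (numRangeFun Z.domain (fun f => Z f))) :
    ∀ f : Z.domain, Z f = lam • (f : H) →
      ∃ hf : (f : H) ∈ Z.adjoint.domain,
        Z.adjoint ⟨(f : H), hf⟩ = (starRingEnd ℂ) lam • (f : H) :=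
  stmt5_general Z hdense hdom lam hbd
end

section
/- Let J = J₀ + D be the discrete Schrödinger operator on ℓ²(ℤ^ν), where (J₀u)(k) = Σ_{‖l‖₁=1} u(k+l) and (Du)(k) = d(k)u(k) for a bounded d : ℤ^ν → ℂ. If u is an eigenfunction of J, then for every j ∈ {1,…,ν}, sup{k_j : k ∈ supp(u)} = ∞ and inf{k_j : k ∈ supp(u)} = −∞. -/
/-!
Evaluating the eigenvalue equation `J u = λ u` at a point `k + e_j` just beyond the last
occupied hyperplane `{p | p j = m}` shows that `u` vanishes on that hyperplane too: every
other term involves a point with `j`-th coordinate `> m`. Hence a support bounded above in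
direction `j` is empty, and `k ↦ -k` turns bounded below into bounded above.
-/

/-- The action of the discrete Schrödinger operator `J = J₀ + D` at a point
`k ∈ ℤ^ν`: `(J u)(k) = Σ_{‖l‖₁ = 1} u(k + l) + d(k) u(k)`, the sum ranging
over the `2ν` nearest neighbours. -/
noncomputable def Jact {ν : ℕ} (d : (Fin ν → ℤ) → ℂ) (u : (Fin ν → ℤ) → ℂ)
    (k : Fin ν → ℤ) : ℂ :=
  (∑ j : Fin ν, (u (k + Pi.single j 1) + u (k - Pi.single j 1))) + d k * u k

section Jact

variable {ν : ℕ} {d u : (Fin ν → ℤ) → ℂ} {lam : ℂ}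

theorem Jact_comp_neg (d u : (Fin ν → ℤ) → ℂ) (k : Fin ν → ℤ) :
    Jact (d ∘ Neg.neg) (u ∘ Neg.neg) k = Jact d u (-k) := by
  simp only [Jact, Function.comp_apply, neg_add, neg_sub', ← sub_eq_add_neg, sub_neg_eq_add]
  congr 1
  exact Finset.sum_congr rfl fun i _ => add_comm _ _

theorem eq_zero_of_coord_eq_of_forall_lt_coord (heig : ∀ k, Jact d u k = lam * u k)
    {j : Fin ν} {m : ℤ} (hzero : ∀ p, m < p j → u p = 0) {k : Fin ν → ℤ} (hk : k j = m) :
    u k = 0 := by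
  have hzero' : ∀ p, m + 1 ≤ p j → u p = 0 := fun p hp => hzero p (by omega)
  have hsum : ∑ i, (u (k + Pi.single j 1 + Pi.single i 1) + u (k + Pi.single j 1 - Pi.single i 1))
      = u k := by
    rw [Finset.sum_eq_single_of_mem j (Finset.mem_univ j)]
    · rw [hzero' _ (by simp [hk]), add_sub_cancel_right, zero_add]
    · intro i _ hij
      rw [hzero' _ (by simp [Pi.single_eq_of_ne hij.symm, hk]),
        hzero' _ (by simp [Pi.single_eq_of_ne hij.symm, hk]), add_zero]
  have hnext : u (k + Pi.single j 1) = 0 := hzero' _ (by simp [hk])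
  have h := heig (k + Pi.single j 1)
  rwa [Jact, hsum, hnext, mul_zero, mul_zero, add_zero] at h

theorem eq_zero_of_coord_bddAbove (heig : ∀ k, Jact d u k = lam * u k) {j : Fin ν} {M : ℤ}
    (hbdd : ∀ k, u k ≠ 0 → k j ≤ M) : u = 0 := by
  have hstrip : ∀ n : ℕ, ∀ p, M - n < p j → u p = 0 := by
    intro n
    induction n with
    | zero => exact fun p hp => not_not.mp fun hne => by have := hbdd p hne; omega
    | succ n ih =>
      intro p hp
      by_cases hpj : p j = M - n
      · exact eq_zero_of_coord_eq_of_forall_lt_coord heig ih hpj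
      · exact ih p (by omega)
  funext p
  exact hstrip (M - p j + 1).toNat p (by omega)

theorem eq_zero_of_coord_bddBelow (heig : ∀ k, Jact d u k = lam * u k) {j : Fin ν} {M : ℤ}
    (hbdd : ∀ k, u k ≠ 0 → M ≤ k j) : u = 0 := by
  have heig' : ∀ k, Jact (d ∘ Neg.neg) (u ∘ Neg.neg) k = lam * (u ∘ Neg.neg) k := fun k => by
    rw [Jact_comp_neg, heig, Function.comp_apply]
  have hbdd' : ∀ k, (u ∘ Neg.neg) k ≠ 0 → k j ≤ -M := fun k hk => by
    have := hbdd (-k) hk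
    simp only [Pi.neg_apply] at this
    omega
  funext p
  simpa using congrFun (eq_zero_of_coord_bddAbove heig' hbdd') (-p)

end Jact

theorem stmt9_general {ν : ℕ} (d : (Fin ν → ℤ) → ℂ)
    (u : lp (fun _ : (Fin ν → ℤ) => ℂ) 2) (hu : u ≠ 0) (lam : ℂ)
    (heig : ∀ k, Jact d (fun m => u m) k = lam * u k) :
    ∀ j : Fin ν,
      (∀ M : ℤ, ∃ k : Fin ν → ℤ, u k ≠ 0 ∧ M < k j) ∧
      (∀ M : ℤ, ∃ k : Fin ν → ℤ, u k ≠ 0 ∧ k j < M) := by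
  have hu' : (fun m => u m) ≠ 0 := fun h => hu (lp.ext h)
  refine fun j => ⟨fun M => ?_, fun M => ?_⟩
  · by_contra! hbdd
    exact hu' (eq_zero_of_coord_bddAbove heig hbdd)
  · by_contra! hbdd
    exact hu' (eq_zero_of_coord_bddBelow heig hbdd)

/-- If `u` is an eigenfunction of `J = J₀ + D` on `ℓ²(ℤ^ν)`, then for every
coordinate direction `j`, `sup {k_j : k ∈ supp u} = ∞` and
`inf {k_j : k ∈ supp u} = −∞`. -/
theorem stmt9 {ν : ℕ} (hν : 1 ≤ ν) (d : (Fin ν → ℤ) → ℂ)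
    (hd : ∃ C, ∀ k, ‖d k‖ ≤ C)
    (u : lp (fun _ : (Fin ν → ℤ) => ℂ) 2) (hu : u ≠ 0) (lam : ℂ)
    (heig : ∀ k, Jact d (fun m => u m) k = lam * u k) :
    ∀ j : Fin ν,
      (∀ M : ℤ, ∃ k : Fin ν → ℤ, u k ≠ 0 ∧ M < k j) ∧
      (∀ M : ℤ, ∃ k : Fin ν → ℤ, u k ≠ 0 ∧ k j < M) :=
  stmt9_general d u hu lam heig
end

section
/- Let J be the 1D discrete Schrödinger operator (Ju)(n) = u(n−1) + d(n)u(n) + u(n+1) on ℓ²(ℤ) with bounded d : ℤ → ℂ. Suppose Im(d(n)) alternates between two distinct values b₁ ≠ b₂, i.e. Im(d(n)) = b₁ for even n and Im(d(n)) = b₂ for odd n. Then J has no eigenvalue lying on the boundary of its numerical range. -/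
open scoped InnerProductSpace ComplexConjugate ENNReal

/-!
If `λ` is an eigenvalue of a bounded operator `T` with unit eigenvector `u`, the derivative at `u`
of the Rayleigh quotient `w ↦ ⟪w, T w⟫ / ⟪w, w⟫` is `h ↦ ⟪u, T h⟫ - λ ⟪u, h⟫`. Unless this
complex-linear functional vanishes it is surjective, and the open mapping property of strictly
differentiable maps puts `λ` in the interior of the numerical range. So at a boundary eigenvalue
`⟪u, T h⟫ = λ ⟪u, h⟫` for all `h`, i.e. `T* u = conj λ • u`.

For `J`, testing this against the basis vectors and comparing with the conjugated eigenvalue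
equation gives `Im d(n) = Im λ` wherever `u(n) ≠ 0`. As `Im d` takes different values on even and
odd sites, `u` lives on a single parity class; there the eigenvalue equation at the sites in
between reads `u(n + 1) = -u(n - 1)`, so `|u|` is constant on that class, which is impossible for a
nonzero vector of `ℓ²`.
-/

noncomputable def Jact1 (d : ℤ → ℂ) (u : ℤ → ℂ) (n : ℤ) : ℂ :=
  u (n - 1) + d n * u n + u (n + 1)

noncomputable def numRangeJ1 (d : ℤ → ℂ) : Set ℂ :=
  {z | ∃ u v : lp (fun _ : ℤ => ℂ) 2, ‖u‖ = 1 ∧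
    (∀ n, v n = Jact1 d (fun m => u m) n) ∧ ⟪u, v⟫_ℂ = z}

section NumericalRange

variable {E : Type*} [NormedAddCommGroup E] [InnerProductSpace ℂ E]

def numericalRange (T : E →L[ℂ] E) : Set ℂ := {z | ∃ w, ‖w‖ = 1 ∧ ⟪w, T w⟫_ℂ = z}

lemma inner_div_inner_mem_numericalRange (T : E →L[ℂ] E) {w : E} (hw : w ≠ 0) :
    ⟪w, T w⟫_ℂ / ⟪w, w⟫_ℂ ∈ numericalRange T := by
  refine ⟨(‖w‖⁻¹ : ℂ) • w, by simp [norm_smul, hw], ?_⟩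
  have hw' : (‖w‖ : ℂ) ≠ 0 := by simpa using hw
  rw [map_smul, inner_smul_left, inner_smul_right, inner_self_eq_norm_sq_to_K]
  simp only [Complex.conj_ofReal, map_inv₀, RCLike.ofReal_eq_complex_ofReal]
  field_simp

lemma hasStrictFDerivAt_inner_div_inner (T : E →L[ℂ] E) {u : E} (hu : ‖u‖ = 1) {μ : ℂ}
    (hTu : T u = μ • u) :
    HasStrictFDerivAt (fun w => ⟪w, T w⟫_ℂ / ⟪w, w⟫_ℂ)
      (((innerSL ℂ u).comp T - μ • innerSL ℂ u).restrictScalars ℝ) u := by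
  have huu : ⟪u, u⟫_ℂ = 1 := by simp [hu]
  have hid := hasStrictFDerivAt_id (𝕜 := ℝ) u
  have hnum := hid.inner ℂ (T.restrictScalars ℝ).hasStrictFDerivAt
  have hden := (hasStrictFDerivAt_inv' (𝕜 := ℝ) (by rw [huu]; exact one_ne_zero)).comp
    (f := fun w => ⟪w, w⟫_ℂ) u (hid.inner ℂ hid)
  refine (hnum.mul hden).congr_fderiv ?_
  ext h
  simp [hu, hTu, inner_smul_right]
  ring

lemma inner_apply_eq_of_norm_eq_one_of_notMem_interior [CompleteSpace E] (T : E →L[ℂ] E)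
    {u : E} (hu : ‖u‖ = 1) {μ : ℂ} (hTu : T u = μ • u)
    (hμ : μ ∉ interior (numericalRange T)) (h : E) : ⟪u, T h⟫_ℂ = μ * ⟪u, h⟫_ℂ := by
  by_contra hne
  set φ := (innerSL ℂ u).comp T - μ • innerSL ℂ u
  have hφh : φ h ≠ 0 := by simpa [φ, sub_eq_zero] using hne
  have hsurj : LinearMap.range (φ.restrictScalars ℝ : E →ₗ[ℝ] ℂ) = ⊤ :=
    LinearMap.range_eq_top.2 fun z => ⟨(z / φ h) • h, by simp [hφh]⟩
  have hmap := (hasStrictFDerivAt_inner_div_inner T hu hTu).map_nhds_eq_of_surj hsurj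
  have huu : ⟪u, u⟫_ℂ = 1 := by simp [hu]
  rw [hTu, inner_smul_right, huu, mul_one, div_one] at hmap
  have hu0 : u ≠ 0 := by rintro rfl; simp at hu
  refine hμ (mem_interior_iff_mem_nhds.2 ?_)
  rw [← hmap, Filter.mem_map]
  filter_upwards [isOpen_ne.mem_nhds hu0] with w hw
  exact inner_div_inner_mem_numericalRange T hw

theorem inner_apply_eq_of_eigenvector_of_notMem_interior [CompleteSpace E] (T : E →L[ℂ] E)
    {u : E} (hu : u ≠ 0) {μ : ℂ} (hTu : T u = μ • u)
    (hμ : μ ∉ interior (numericalRange T)) (h : E) : ⟪u, T h⟫_ℂ = μ * ⟪u, h⟫_ℂ := by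
  set c : ℂ := ((‖u‖⁻¹ : ℝ) : ℂ)
  have hc : conj c ≠ 0 := by simpa [c] using hu
  have key := inner_apply_eq_of_norm_eq_one_of_notMem_interior T (u := c • u)
    (by simp [c, norm_smul, hu]) (by rw [map_smul, hTu, smul_comm]) hμ h
  rw [inner_smul_left, inner_smul_left, mul_left_comm] at key
  exact mul_left_cancel₀ hc key

end NumericalRange

section Lp

variable {α β 𝕜 E : Type*} [NormedAddCommGroup E] {p : ℝ≥0∞}

lemma Memℓp.comp_equiv {f : α → E} (hf : Memℓp f p) (hp : 0 < p.toReal) (e : β ≃ α) :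
    Memℓp (f ∘ e) p :=
  memℓp_gen (e.summable_iff.2 (hf.summable hp))

lemma Memℓp.eq_zero_of_norm_const {f : α → E} (hf : Memℓp f p) (hp : 0 < p.toReal)
    {s : ℕ → α} (hs : s.Injective) (hconst : ∀ k, ‖f (s k)‖ = ‖f (s 0)‖) : f (s 0) = 0 := by
  have hsum := (hf.summable hp).comp_injective hs
  simp only [Function.comp_def, hconst, summable_const_iff] at hsum
  rwa [Real.rpow_eq_zero (norm_nonneg _) hp.ne', norm_eq_zero] at hsum

lemma lp.norm_comp_equiv (f : lp (fun _ : α => E) p) (hp : 0 < p.toReal) (e : β ≃ α) :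
    ‖(⟨f ∘ e, (lp.memℓp f).comp_equiv hp e⟩ : lp (fun _ : β => E) p)‖ = ‖f‖ := by
  rw [lp.norm_eq_tsum_rpow hp, lp.norm_eq_tsum_rpow hp]
  exact congrArg (· ^ _) (e.tsum_eq fun i => ‖f i‖ ^ p.toReal)

variable [NormedField 𝕜] [NormedSpace 𝕜 E] [Fact (1 ≤ p)]

noncomputable def lp.compEquivCLM (hp : 0 < p.toReal) (e : β ≃ α) :
    lp (fun _ : α => E) p →L[𝕜] lp (fun _ : β => E) p :=
  LinearMap.mkContinuous
    { toFun f := ⟨f ∘ e, (lp.memℓp f).comp_equiv hp e⟩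
      map_add' _ _ := rfl
      map_smul' _ _ := rfl }
    1 fun f => (lp.norm_comp_equiv f hp e).trans_le (one_mul _).ge

@[simp]
lemma lp.compEquivCLM_apply (hp : 0 < p.toReal) (e : β ≃ α) (f : lp (fun _ : α => E) p)
    (i : β) : lp.compEquivCLM (𝕜 := 𝕜) hp e f i = f (e i) :=
  rfl

end Lp

section Schrodinger

local notation "ℓ²ℤ" => lp (fun _ : ℤ => ℂ) 2

noncomputable def schrodingerOp (d : ℤ → ℂ) {C : ℝ} (hC : 0 ≤ C) (hd : ∀ n, ‖d n‖ ≤ C) :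
    ℓ²ℤ →L[ℂ] ℓ²ℤ :=
  lp.compEquivCLM (by norm_num) (Equiv.subRight 1) +
    lp.mapCLM 2 (fun n => d n • ContinuousLinearMap.id ℂ ℂ) hC
      (fun n => (norm_smul_le _ _).trans (by simpa using hd n)) +
    lp.compEquivCLM (by norm_num) (Equiv.addRight 1)

variable (d : ℤ → ℂ) {C : ℝ} (hC : 0 ≤ C) (hd : ∀ n, ‖d n‖ ≤ C)

lemma schrodingerOp_apply (u : ℓ²ℤ) (n : ℤ) :
    schrodingerOp d hC hd u n = Jact1 d (fun m => u m) n := by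
  simp [schrodingerOp, Jact1]

lemma numericalRange_schrodingerOp_subset :
    numericalRange (schrodingerOp d hC hd) ⊆ numRangeJ1 d :=
  fun _ ⟨w, hw, hz⟩ => ⟨w, _, hw, schrodingerOp_apply d hC hd w, hz⟩

lemma schrodingerOp_single (n : ℤ) :
    schrodingerOp d hC hd (lp.single 2 n 1) =
      lp.single 2 (n + 1) 1 + d n • lp.single 2 n 1 + lp.single 2 (n - 1) 1 := by
  ext m
  simp only [schrodingerOp_apply, Jact1, lp.coeFn_add, Pi.add_apply, lp.coeFn_smul,
    Pi.smul_apply, lp.single_apply, Pi.single_apply, smul_eq_mul]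
  split_ifs <;> simp_all <;> omega

lemma inner_schrodingerOp_single (u : ℓ²ℤ) (n : ℤ) :
    ⟪u, schrodingerOp d hC hd (lp.single 2 n 1)⟫_ℂ =
      conj (u (n + 1)) + d n * conj (u n) + conj (u (n - 1)) := by
  simp [schrodingerOp_single, lp.inner_single_right]

variable {d hC hd}

lemma im_eq_of_inner_schrodingerOp_eq {μ : ℂ} {u : ℓ²ℤ}
    (heig : ∀ n, Jact1 d (fun m => u m) n = μ * u n)
    (hadj : ∀ h, ⟪u, schrodingerOp d hC hd h⟫_ℂ = μ * ⟪u, h⟫_ℂ) {n : ℤ} (hn : u n ≠ 0) :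
    (d n).im = μ.im := by
  have hadj_n := hadj (lp.single 2 n 1)
  rw [inner_schrodingerOp_single, lp.inner_single_right, RCLike.inner_apply] at hadj_n
  have heig_conj := congrArg conj (heig n)
  simp only [Jact1, map_add, map_mul] at heig_conj
  have hdiff : (d n - conj (d n)) * conj (u n) = (μ - conj μ) * conj (u n) := by
    linear_combination hadj_n - heig_conj
  have him := congrArg Complex.im (mul_right_cancel₀ (by simpa using hn) hdiff)
  simp only [Complex.sub_im, Complex.conj_im] at him
  linarith

lemma apply_eq_zero_of_Jact1_eq_of_forall_odd_eq_zero {μ : ℂ} (u : ℓ²ℤ)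
    (heig : ∀ n, Jact1 d (fun m => u m) n = μ * u n) (n₀ : ℤ)
    (hodd : ∀ k : ℤ, u (n₀ + 2 * k + 1) = 0) : u n₀ = 0 := by
  have hstep (k : ℤ) : u (n₀ + 2 * k + 2) = -u (n₀ + 2 * k) := by
    have h := heig (n₀ + 2 * k + 1)
    simp only [Jact1, add_sub_cancel_right, hodd, mul_zero, add_zero] at h
    rw [add_assoc _ 1 1, one_add_one_eq_two] at h
    linear_combination h
  have hconst (k : ℕ) : ‖u (n₀ + 2 * k)‖ = ‖u n₀‖ := by
    induction k with
    | zero => simp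
    | succ k ih => rw [Nat.cast_succ, mul_add_one, ← add_assoc, hstep, norm_neg, ih]
  simpa using (lp.memℓp u).eq_zero_of_norm_const (by norm_num)
    (s := fun k : ℕ => n₀ + 2 * k) (fun a b hab => by simpa using hab) (by simpa using hconst)

end Schrodinger

/-- If `Im(d n)` alternates between two distinct values `b₁` (even `n`) and
`b₂` (odd `n`), then `J` has no eigenvalue on the boundary of its numerical
range. -/
theorem stmt14 (d : ℤ → ℂ) (hd : ∃ C, ∀ n, ‖d n‖ ≤ C)
    (b₁ b₂ : ℝ) (hb : b₁ ≠ b₂)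
    (halt : ∀ n : ℤ, (d n).im = if Even n then b₁ else b₂) :
    ¬ ∃ (lam : ℂ) (u : lp (fun _ : ℤ => ℂ) 2), u ≠ 0 ∧
        (∀ n, Jact1 d (fun m => u m) n = lam * u n) ∧
        lam ∈ frontier (numRangeJ1 d) := by
  rintro ⟨lam, u, hu, heig, hfr⟩
  obtain ⟨C, hd⟩ := hd
  have hC : 0 ≤ C := (norm_nonneg _).trans (hd 0)
  have hJu : schrodingerOp d hC hd u = lam • u := by
    ext n; simp [schrodingerOp_apply, heig n]
  have hint : lam ∉ interior (numericalRange (schrodingerOp d hC hd)) := fun h =>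
    hfr.2 (interior_mono (numericalRange_schrodingerOp_subset d hC hd) h)
  have him {n : ℤ} (hn : u n ≠ 0) : (d n).im = lam.im := im_eq_of_inner_schrodingerOp_eq heig
    (inner_apply_eq_of_eigenvector_of_notMem_interior _ hu hJu hint) hn
  obtain ⟨n₀, hn₀⟩ : ∃ n, u n ≠ 0 := by
    by_contra! h; exact hu (lp.ext (funext h))
  have hparity (k : ℤ) : (d (n₀ + 2 * k + 1)).im ≠ (d n₀).im := by
    rw [halt, halt]
    by_cases h : Even n₀ <;> simp [h, Int.even_add, hb, hb.symm]
  refine hn₀ (apply_eq_zero_of_Jact1_eq_of_forall_odd_eq_zero u heig n₀ fun k => ?_)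
  by_contra hk
  exact hparity k ((him hk).trans (him hn₀).symm)
end

section
/- Let J be the 1D discrete Schrödinger operator on ℓ²(ℤ) with bounded potential d. If J has an eigenvalue with imaginary part b on the boundary of its numerical range, then for every n ∈ ℤ, Im(d(n)) = b or Im(d(n+1)) = b. -/
/-!
Let `u` be a unit eigenvector of `T` for `λ` and `v ⊥ u`. For `w = u + ε v` the Rayleigh quotient
`⟪w, T w⟫ / ‖w‖²` is `λ + ε ⟪u, T v⟫ + O(|ε|²)`, so if `⟪u, T v⟫ ≠ 0` the inverse function theorem
makes these values fill a neighbourhood of `λ`. Hence an eigenvalue on the boundary of the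
numerical range satisfies `⟪u, T v⟫ = λ ⟪u, v⟫` for every `v`, i.e. `T* u = conj λ • u`.

For the Schrödinger operator, testing this against `δₙ` and subtracting `J u = λ u` gives
`Im d(n) = Im λ` wherever `u(n) ≠ 0`. A solution of the three-term recurrence vanishing at two
consecutive sites vanishes identically, so `u(n)` and `u(n + 1)` cannot both be `0`.
-/

open scoped InnerProductSpace

open Filter Topology ComplexConjugate

theorem hasStrictFDerivAt_ofReal_norm_sq_zero :
    HasStrictFDerivAt (fun ε : ℂ => ((‖ε‖ ^ 2 : ℝ) : ℂ)) (0 : ℂ →L[ℝ] ℂ) 0 := by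
  simpa using Complex.ofRealCLM.hasStrictFDerivAt.comp 0 (hasStrictFDerivAt_norm_sq (0 : ℂ))

theorem map_nhds_zero_quadratic_perturbation {a : ℂ} (ha : a ≠ 0) (lam c B : ℂ) :
    map (fun ε : ℂ => (lam + ε * a + ((‖ε‖ ^ 2 : ℝ) : ℂ) * c) / (1 + ((‖ε‖ ^ 2 : ℝ) : ℂ) * B))
      (𝓝 0) = 𝓝 lam := by
  have hq := hasStrictFDerivAt_ofReal_norm_sq_zero
  have hnum := (((hasStrictFDerivAt_id (0 : ℂ)).mul_const a).const_add lam).add (hq.mul_const c)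
  have hden := (hasStrictFDerivAt_inv' (𝕜 := ℝ) (x := 1 + ((‖(0 : ℂ)‖ ^ 2 : ℝ) : ℂ) * B)
    (by simp)).comp 0 ((hq.mul_const B).const_add 1)
  let e : ℂ ≃L[ℝ] ℂ := (ContinuousLinearEquiv.unitsEquivAut ℂ (Units.mk0 a ha)).restrictScalars ℝ
  simp only [div_eq_mul_inv]
  refine ((hnum.mul' hden).congr_fderiv (g' := (e : ℂ →L[ℝ] ℂ)) ?_).map_nhds_eq_of_equiv.trans ?_
  · ext
    simp [e, mul_comm]
  · simp

namespace LinearPMap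

variable {E : Type*} [NormedAddCommGroup E] [InnerProductSpace ℂ E]

def numericalRange (T : E →ₗ.[ℂ] E) : Set ℂ :=
  {z | ∃ x : T.domain, ‖(x : E)‖ = 1 ∧ ⟪(x : E), T x⟫_ℂ = z}

theorem inner_div_norm_sq_mem_numericalRange (T : E →ₗ.[ℂ] E) {x : T.domain}
    (hx : (x : E) ≠ 0) : ⟪(x : E), T x⟫_ℂ / ((‖(x : E)‖ ^ 2 : ℝ) : ℂ) ∈ T.numericalRange := by
  refine ⟨(‖(x : E)‖ : ℂ)⁻¹ • x, norm_smul_inv_norm hx, ?_⟩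
  rw [T.map_smul, Submodule.coe_smul, inner_smul_left, inner_smul_right, map_inv₀,
    Complex.conj_ofReal]
  field_simp
  push_cast
  ring

theorem mem_interior_numericalRange_of_inner_ne_zero (T : E →ₗ.[ℂ] E) {lam : ℂ}
    {u v : T.domain} (hu : ‖(u : E)‖ = 1) (hTu : T u = lam • (u : E)) (huv : ⟪(u : E), v⟫_ℂ = 0)
    (hTv : ⟪(u : E), T v⟫_ℂ ≠ 0) : lam ∈ interior T.numericalRange := by
  have huu : ⟪(u : E), u⟫_ℂ = 1 := by simp [inner_self_eq_norm_sq_to_K, hu]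
  have hvu : ⟪(v : E), u⟫_ℂ = 0 := inner_eq_zero_symm.mp huv
  have hmem : ∀ ε : ℂ, (lam + ε * ⟪(u : E), T v⟫_ℂ + ((‖ε‖ ^ 2 : ℝ) : ℂ) * ⟪(v : E), T v⟫_ℂ) /
      (1 + ((‖ε‖ ^ 2 : ℝ) : ℂ) * ((‖(v : E)‖ ^ 2 : ℝ) : ℂ)) ∈ T.numericalRange := by
    intro ε
    have hnorm : ‖(u : E) + ε • v‖ ^ 2 = 1 + ‖ε‖ ^ 2 * ‖(v : E)‖ ^ 2 := by
      rw [@norm_add_sq ℂ, inner_smul_right, huv, mul_zero, RCLike.zero_re, hu, norm_smul]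
      ring
    have hinner : ⟪(u : E) + ε • v, T (u + ε • v)⟫_ℂ =
        lam + ε * ⟪(u : E), T v⟫_ℂ + ((‖ε‖ ^ 2 : ℝ) : ℂ) * ⟪(v : E), T v⟫_ℂ := by
      rw [T.map_add, T.map_smul, hTu]
      simp only [inner_add_left, inner_add_right, inner_smul_left, inner_smul_right, huu, hvu]
      push_cast
      rw [← Complex.conj_mul']
      ring
    have hw : (u : E) + ε • v ≠ 0 := by
      rw [← norm_ne_zero_iff, ← pow_ne_zero_iff two_ne_zero, hnorm]
      positivity
    have := T.inner_div_norm_sq_mem_numericalRange (x := u + ε • v) hw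
    rwa [Submodule.coe_add, Submodule.coe_smul, hinner, hnorm, Complex.ofReal_add,
      Complex.ofReal_mul, Complex.ofReal_one] at this
  rw [mem_interior_iff_mem_nhds, ← map_nhds_zero_quadratic_perturbation hTv]
  exact mem_map.mpr (univ_mem' hmem)

theorem inner_apply_eq_mul_inner_of_mem_frontier_of_norm_eq_one (T : E →ₗ.[ℂ] E) {lam : ℂ}
    {u : T.domain} (hu : ‖(u : E)‖ = 1) (hTu : T u = lam • (u : E))
    (hfr : lam ∈ frontier T.numericalRange) (v : T.domain) :
    ⟪(u : E), T v⟫_ℂ = lam * ⟪(u : E), v⟫_ℂ := by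
  have huu : ⟪(u : E), u⟫_ℂ = 1 := by simp [inner_self_eq_norm_sq_to_K, hu]
  have horth : ⟪(u : E), ↑(v - ⟪(u : E), v⟫_ℂ • u)⟫_ℂ = 0 := by
    rw [Submodule.coe_sub, Submodule.coe_smul, inner_sub_right, inner_smul_right, huu, mul_one,
      sub_self]
  have h := not_not.mp fun h =>
    hfr.2 (T.mem_interior_numericalRange_of_inner_ne_zero hu hTu horth h)
  rw [T.map_sub, T.map_smul, hTu, inner_sub_right, inner_smul_right, inner_smul_right, huu] at h
  linear_combination h

theorem inner_apply_eq_mul_inner_of_mem_frontier (T : E →ₗ.[ℂ] E) {lam : ℂ} {u : T.domain}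
    (hu : (u : E) ≠ 0) (hTu : T u = lam • (u : E)) (hfr : lam ∈ frontier T.numericalRange)
    (v : T.domain) : ⟪(u : E), T v⟫_ℂ = lam * ⟪(u : E), v⟫_ℂ := by
  have h := T.inner_apply_eq_mul_inner_of_mem_frontier_of_norm_eq_one
    (u := (‖(u : E)‖ : ℂ)⁻¹ • u) (norm_smul_inv_norm hu)
    (by rw [T.map_smul, hTu, Submodule.coe_smul, smul_comm]) hfr v
  rw [Submodule.coe_smul, inner_smul_left, inner_smul_left] at h
  have hk : conj (‖(u : E)‖ : ℂ)⁻¹ ≠ 0 := by simpa using hu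
  exact mul_left_cancel₀ hk (by linear_combination h)

end LinearPMap

local notation "ℓ²" => lp (fun _ : ℤ => ℂ) 2

theorem Jact1_add (d u v : ℤ → ℂ) : Jact1 d (u + v) = Jact1 d u + Jact1 d v := by
  ext n
  simp only [Jact1, Pi.add_apply]
  ring

theorem Jact1_smul (d : ℤ → ℂ) (c : ℂ) (u : ℤ → ℂ) : Jact1 d (c • u) = c • Jact1 d u := by
  ext n
  simp only [Jact1, Pi.smul_apply, smul_eq_mul]
  ring

theorem Jact1_single (d : ℤ → ℂ) (n : ℤ) :
    Jact1 d (Pi.single n 1) = Pi.single (n - 1) 1 + Pi.single n (d n) + Pi.single (n + 1) 1 := by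
  ext m
  simp only [Jact1, Pi.add_apply, Pi.single_apply]
  split_ifs <;> simp_all <;> omega

-- The maximal domain: with it, `numRangeJ1 d` is exactly the numerical range of `schrodinger d`.
def schrodingerDomain (d : ℤ → ℂ) : Submodule ℂ ℓ² where
  carrier := {u | Memℓp (Jact1 d ⇑u) 2}
  add_mem' {u v} hu hv := by
    show Memℓp (Jact1 d ⇑(u + v)) 2
    rw [lp.coeFn_add, Jact1_add]
    exact hu.add hv
  zero_mem' := by
    show Memℓp (Jact1 d ⇑(0 : ℓ²)) 2
    rw [lp.coeFn_zero, ← zero_smul ℂ (0 : ℤ → ℂ), Jact1_smul, zero_smul]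
    exact zero_memℓp
  smul_mem' c u hu := by
    show Memℓp (Jact1 d ⇑(c • u)) 2
    rw [lp.coeFn_smul, Jact1_smul]
    exact hu.const_smul c

noncomputable def schrodinger (d : ℤ → ℂ) : ℓ² →ₗ.[ℂ] ℓ² where
  domain := schrodingerDomain d
  toFun :=
    { toFun u := ⟨Jact1 d ⇑(u : ℓ²), u.2⟩
      map_add' u v := lp.ext (by simp only [Submodule.coe_add, lp.coeFn_add, Jact1_add])
      map_smul' c u := lp.ext (by
        simp only [Submodule.coe_smul, lp.coeFn_smul, Jact1_smul, RingHom.id_apply]) }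

theorem numRangeJ1_eq_numericalRange (d : ℤ → ℂ) :
    numRangeJ1 d = (schrodinger d).numericalRange := by
  ext z
  constructor
  · rintro ⟨u, v, hu, hv, rfl⟩
    have hJu : Jact1 d ⇑u = ⇑v := (funext hv).symm
    refine ⟨⟨u, show Memℓp (Jact1 d ⇑u) 2 from hJu ▸ v.2⟩, hu, ?_⟩
    congr 1
    exact lp.ext hJu
  · rintro ⟨x, hx, rfl⟩
    exact ⟨x, schrodinger d x, hx, fun n => rfl, rfl⟩

theorem Jact1_lp_single (d : ℤ → ℂ) (n : ℤ) :
    Jact1 d ⇑(lp.single 2 n 1 : ℓ²) =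
      ⇑(lp.single 2 (n - 1) 1 + lp.single 2 n (d n) + lp.single 2 (n + 1) 1 : ℓ²) := by
  simp only [lp.coeFn_add, lp.coeFn_single, Jact1_single]

theorem Jact1_conj_eq_of_eigenvalue_mem_frontier {d : ℤ → ℂ} {lam : ℂ} {u : ℓ²} (hu : u ≠ 0)
    (hJ : ∀ n, Jact1 d u n = lam * u n) (hfr : lam ∈ frontier (numRangeJ1 d)) (n : ℤ) :
    Jact1 (fun m => conj (d m)) u n = conj lam * u n := by
  have hJu : Jact1 d ⇑u = ⇑(lam • u) := funext hJ
  have hu_mem : u ∈ (schrodinger d).domain :=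
    show Memℓp (Jact1 d ⇑u) 2 from hJu ▸ (lam • u).2
  have hδ : lp.single 2 n 1 ∈ (schrodinger d).domain :=
    show Memℓp (Jact1 d _) 2 from Jact1_lp_single d n ▸ lp.memℓp _
  rw [numRangeJ1_eq_numericalRange] at hfr
  have h := (schrodinger d).inner_apply_eq_mul_inner_of_mem_frontier (u := ⟨u, hu_mem⟩)
    (by simpa using hu) (lp.ext hJu) hfr ⟨_, hδ⟩
  rw [show schrodinger d ⟨_, hδ⟩ = _ from lp.ext (Jact1_lp_single d n)] at h
  simp only [inner_add_right, lp.inner_single_right, RCLike.inner_apply] at h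
  have h' := congrArg conj h
  simp only [map_add, map_mul, map_one, Complex.conj_conj] at h'
  simp only [Jact1]
  linear_combination h'

theorem im_eq_of_Jact1_eq_of_Jact1_conj_eq {d u : ℤ → ℂ} {lam : ℂ} {n : ℤ}
    (h : Jact1 d u n = lam * u n) (hconj : Jact1 (fun m => conj (d m)) u n = conj lam * u n)
    (hn : u n ≠ 0) : (d n).im = lam.im := by
  have hsub : (d n - conj (d n)) * u n = (lam - conj lam) * u n := by
    simp only [Jact1] at h hconj
    linear_combination h - hconj
  simpa [Complex.sub_conj] using congrArg Complex.im (mul_right_cancel₀ hn hsub)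

theorem eq_zero_of_Jact1_eq_mul_of_consecutive_zeros {d u : ℤ → ℂ} {lam : ℂ}
    (hJ : ∀ n, Jact1 d u n = lam * u n) {n : ℤ} (h₀ : u n = 0) (h₁ : u (n + 1) = 0) : u = 0 := by
  have hup : ∀ m, n ≤ m → u m = 0 ∧ u (m + 1) = 0 := by
    refine Int.leInduction ⟨h₀, h₁⟩ fun m _ ⟨hm, hm₁⟩ => ⟨hm₁, ?_⟩
    have := hJ (m + 1)
    simp only [Jact1, add_sub_cancel_right, hm, hm₁] at this
    linear_combination this
  have hdown : ∀ m ≤ n, u m = 0 ∧ u (m + 1) = 0 := by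
    refine Int.leInductionDown ⟨h₀, h₁⟩ fun m _ ⟨hm, hm₁⟩ => ⟨?_, by rwa [sub_add_cancel]⟩
    have := hJ m
    simp only [Jact1, hm, hm₁] at this
    linear_combination this
  funext m
  exact (le_total n m).elim (fun h => (hup m h).1) (fun h => (hdown m h).1)

theorem stmt15_general (d : ℤ → ℂ) (b : ℝ)
    (heig : ∃ (lam : ℂ) (u : lp (fun _ : ℤ => ℂ) 2), lam.im = b ∧ u ≠ 0 ∧
      (∀ n, Jact1 d (fun m => u m) n = lam * u n) ∧
      lam ∈ frontier (numRangeJ1 d)) :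
    ∀ n : ℤ, (d n).im = b ∨ (d (n + 1)).im = b := by
  obtain ⟨lam, u, rfl, hu, hJ, hfr⟩ := heig
  have hJconj := Jact1_conj_eq_of_eigenvalue_mem_frontier hu hJ hfr
  have hzero : ∀ m, (d m).im ≠ lam.im → u m = 0 := fun m hm =>
    not_not.mp fun hum => hm (im_eq_of_Jact1_eq_of_Jact1_conj_eq (hJ m) (hJconj m) hum)
  intro n
  by_contra! h
  exact hu (lp.ext (eq_zero_of_Jact1_eq_mul_of_consecutive_zeros hJ (hzero n h.1) (hzero _ h.2)))

/-- If the 1D operator `J` has an eigenvalue with imaginary part `b` on the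
boundary of its numerical range, then for every `n ∈ ℤ`, `Im(d n) = b` or
`Im(d (n+1)) = b`. -/
theorem stmt15 (d : ℤ → ℂ) (hd : ∃ C, ∀ n, ‖d n‖ ≤ C) (b : ℝ)
    (heig : ∃ (lam : ℂ) (u : lp (fun _ : ℤ => ℂ) 2), lam.im = b ∧ u ≠ 0 ∧
      (∀ n, Jact1 d (fun m => u m) n = lam * u n) ∧
      lam ∈ frontier (numRangeJ1 d)) :
    ∀ n : ℤ, (d n).im = b ∨ (d (n + 1)).im = b :=
  stmt15_general d b heig
end

section
/- Let b₁ ≠ b₂ be real numbers and let d : ℤ → ℂ have Im(d(n)) = b₁ for n even and Im(d(n)) = b₂ for n odd. If u ∈ ℓ²(ℤ) satisfies u(n−1) + d(n)u(n) + u(n+1) = λu(n) for all n, and Im(d(n)) = Im(λ) for all n ∈ supp(u), then u = 0. -/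
/-!
Two neighbouring sites cannot both lie in the support of `u`, since `Im d` takes different
values on them while both would have to equal `Im λ`. Hence either `u (m + 1) = 0`, and then
the equation at `m + 1` reads `u m + u (m + 2) = 0`, or `u m = u (m + 2) = 0`. So
`u (m + 2) = -u m` for every `m`: `|u|` is constant on each residue class mod 2, which is
impossible for a nonzero element of `ℓ²(ℤ)`.
-/

open Filter Topology

theorem Memℓp.tendsto_norm_cofinite_zero {ι : Type*} {E : ι → Type*}
    [∀ i, NormedAddCommGroup (E i)] {p : ENNReal} {f : ∀ i, E i} (hf : Memℓp f p)
    (hp : p ≠ ⊤) : Tendsto (fun i => ‖f i‖) cofinite (𝓝 0) := by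
  rcases eq_or_ne p 0 with rfl | hp₀
  · refine tendsto_const_nhds.congr' ?_
    filter_upwards [(memℓp_zero_iff.1 hf).compl_mem_cofinite] with i hi
    rw [Set.mem_compl_iff, Set.notMem_ofPred_iff, not_not] at hi
    rw [hi, norm_zero]
  · have hp' : 0 < p.toReal := ENNReal.toReal_pos hp₀ hp
    have hpow : Tendsto (fun i => ‖f i‖ ^ p.toReal) cofinite (𝓝 0) :=
      ((memℓp_gen_iff hp').1 hf).tendsto_cofinite_zero
    have hroot :=
      (Real.continuousAt_rpow_const 0 p.toReal⁻¹ (Or.inr (by positivity))).tendsto.comp hpow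
    rw [Real.zero_rpow (by positivity)] at hroot
    refine hroot.congr fun i => ?_
    simp [Function.comp, ← Real.rpow_mul (norm_nonneg _), hp'.ne']

theorem Memℓp.eq_zero_of_forall_norm_eq {ι : Type*} {E : ι → Type*}
    [∀ i, NormedAddCommGroup (E i)] {p : ENNReal} {f : ∀ i, E i} (hf : Memℓp f p)
    (hp : p ≠ ⊤) {g : ℕ → ι} (hg : g.Injective) {i : ι} (h : ∀ k, ‖f (g k)‖ = ‖f i‖) :
    f i = 0 := by
  have hlim := (hf.tendsto_norm_cofinite_zero hp).comp hg.tendsto_cofinite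
  rw [Nat.cofinite_eq_atTop] at hlim
  simp only [Function.comp_def, h] at hlim
  exact norm_eq_zero.1 (tendsto_nhds_unique tendsto_const_nhds hlim)

theorem ite_even_ne_ite_even_add_one {α : Type*} {a b : α} (hab : a ≠ b) (n : ℤ) :
    (if Even n then a else b) ≠ if Even (n + 1) then a else b := by
  rcases Int.even_or_odd n with hn | hn
  · simp [hn, hab]
  · simp [Int.not_even_iff_odd.2 hn, hab.symm]

theorem add_two_eq_neg_of_three_term_of_eq_zero {R : Type*} [Ring R] {u d : ℤ → R} {lam : R}
    (heq : ∀ n, u (n - 1) + d n * u n + u (n + 1) = lam * u n) {m : ℤ} (hm : u (m + 1) = 0) :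
    u (m + 2) = -u m := by
  have h := heq (m + 1)
  rw [add_sub_cancel_right, hm, add_assoc m 1 1, one_add_one_eq_two] at h
  simp only [mul_zero, add_zero] at h
  exact eq_neg_of_add_eq_zero_right h

theorem add_two_eq_neg_of_three_term {R : Type*} [Ring R] {u d : ℤ → R} {lam : R}
    (heq : ∀ n, u (n - 1) + d n * u n + u (n + 1) = lam * u n)
    (hsep : ∀ n, u n = 0 ∨ u (n + 1) = 0) (m : ℤ) : u (m + 2) = -u m := by
  by_cases hm : u (m + 1) = 0
  · exact add_two_eq_neg_of_three_term_of_eq_zero heq hm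
  · have hm₀ : u m = 0 := (hsep m).resolve_right hm
    have hm₂ : u (m + 2) = 0 := by
      simpa [add_assoc, one_add_one_eq_two] using (hsep (m + 1)).resolve_left hm
    rw [hm₀, hm₂, neg_zero]

theorem norm_add_two_mul_eq_of_add_two_eq_neg {E : Type*} [SeminormedAddCommGroup E] {u : ℤ → E}
    (h : ∀ m, u (m + 2) = -u m) (n : ℤ) (k : ℕ) : ‖u (n + 2 * k)‖ = ‖u n‖ := by
  induction k with
  | zero => simp
  | succ k ih =>
    rw [Nat.cast_succ, mul_add_one, ← add_assoc, h, norm_neg, ih]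

/-- Let `b₁ ≠ b₂` and let `d : ℤ → ℂ` satisfy `Im(d n) = b₁` for even `n` and
`Im(d n) = b₂` for odd `n`.  If `u ∈ ℓ²(ℤ)` satisfies
`u(n−1) + d(n) u(n) + u(n+1) = λ u(n)` for all `n`, and `Im(d n) = Im λ` on
the support of `u`, then `u = 0`. -/
theorem stmt19 (b₁ b₂ : ℝ) (hb : b₁ ≠ b₂) (d : ℤ → ℂ)
    (halt : ∀ n : ℤ, (d n).im = if Even n then b₁ else b₂)
    (lam : ℂ) (u : lp (fun _ : ℤ => ℂ) 2)
    (heq : ∀ n : ℤ, u (n - 1) + d n * u n + u (n + 1) = lam * u n)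
    (hsupp : ∀ n : ℤ, u n ≠ 0 → (d n).im = lam.im) :
    u = 0 := by
  have hsep : ∀ n, u n = 0 ∨ u (n + 1) = 0 := by
    intro n
    by_contra! h
    apply ite_even_ne_ite_even_add_one hb n
    rw [← halt, ← halt, hsupp n h.1, hsupp (n + 1) h.2]
  have hper := add_two_eq_neg_of_three_term heq hsep
  ext n
  refine (lp.memℓp u).eq_zero_of_forall_norm_eq ENNReal.ofNat_ne_top
    (g := fun k : ℕ => n + 2 * k) (fun a b hab => by simpa using hab) fun k => ?_
  exact norm_add_two_mul_eq_of_add_two_eq_neg hper n k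
end
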